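/- For every n ≥ 3, the space real ℓ₁ⁿ has a FUNTF of length n+1. Explicitly, there exists a ∈ (0,1) solving −a + (n−3)(1−a)/(n−1) + 1/n = 0 such that the vectors x_j = a e_j − Σ_{i≠j} (1−a)/(n−1) e_i (1 ≤ j ≤ n) and x_{n+1} = Σ_i (1/n) e_i, with functionals x_j* = e_j* − Σ_{i≠j} e_i* and x_{n+1}* = Σ_i e_i*, satisfy ‖x_j‖₁ = ‖x_j*‖_∞ = x_j*(x_j) = 1 for all j and Σ_{j=1}^{n+1} x_j* ⊗ x_j = (1 + 1/n) I. -/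

import Mathlib

open scoped BigOperators

/-- The duality pairing between `ℓ_∞ⁿ` and `ℓ₁ⁿ`. -/
noncomputable def pairn (n : ℕ) (f : PiLp ⊤ (fun _ : Fin n => ℝ))
    (v : PiLp 1 (fun _ : Fin n => ℝ)) : ℝ :=
  ∑ i, (WithLp.equiv ⊤ (Fin n → ℝ) f) i * (WithLp.equiv 1 (Fin n → ℝ) v) i

/-- For every `n ≥ 3`, real `ℓ₁ⁿ` has a FUNTF of length `n+1`, given by the explicit
pyramid-type construction. -/
theorem funtf_length_n_plus_one_ell1 (n : ℕ) (hn : 3 ≤ n) :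
    ∃ a : ℝ, 0 < a ∧ a < 1 ∧
      (-a + ((n : ℝ) - 3) * (1 - a) / ((n : ℝ) - 1) + 1 / (n : ℝ) = 0) ∧
      ∃ (x : Fin n → PiLp 1 (fun _ : Fin n => ℝ)) (xl : PiLp 1 (fun _ : Fin n => ℝ))
        (g : Fin n → PiLp ⊤ (fun _ : Fin n => ℝ)) (gl : PiLp ⊤ (fun _ : Fin n => ℝ)),
        (∀ j i, (WithLp.equiv 1 (Fin n → ℝ)) (x j) i
            = if i = j then a else -((1 - a) / ((n : ℝ) - 1))) ∧
        (∀ i, (WithLp.equiv 1 (Fin n → ℝ)) xl i = 1 / (n : ℝ)) ∧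
        (∀ j i, (WithLp.equiv ⊤ (Fin n → ℝ)) (g j) i = if i = j then 1 else -1) ∧
        (∀ i, (WithLp.equiv ⊤ (Fin n → ℝ)) gl i = 1) ∧
        (∀ j, ‖x j‖ = 1) ∧ ‖xl‖ = 1 ∧ (∀ j, ‖g j‖ = 1) ∧ ‖gl‖ = 1 ∧
        (∀ j, pairn n (g j) (x j) = 1) ∧ pairn n gl xl = 1 ∧
        (∀ v : PiLp 1 (fun _ : Fin n => ℝ),
          (∑ j, pairn n (g j) v • x j) + pairn n gl v • xl = (1 + 1 / (n : ℝ)) • v) := by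
  have hA : (3 : ℝ) ≤ (n : ℝ) := by exact_mod_cast hn
  set A : ℝ := (n : ℝ) with hAdef
  have hA0 : A ≠ 0 := by positivity
  have hA1 : A - 1 ≠ 0 := by nlinarith
  have hA2 : A - 2 ≠ 0 := by nlinarith
  have hA1pos : (0:ℝ) < A - 1 := by linarith
  have hne : Nonempty (Fin n) := ⟨⟨0, by omega⟩⟩
  set a : ℝ := (A ^ 2 - 2 * A - 1) / (2 * A * (A - 2)) with hadef
  set b : ℝ := (1 - a) / (A - 1) with hbdef
  have hapos : 0 < a := by apply div_pos <;> nlinarith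
  have halt1 : a < 1 := by
    rw [hadef, div_lt_one (by nlinarith)]; nlinarith
  have hbnn : 0 ≤ b := div_nonneg (by linarith) (by linarith)
  have heq : -a + (A - 3) * (1 - a) / (A - 1) + 1 / A = 0 := by
    rw [hadef]; field_simp; ring
  have hsum2 : 2 * (a + b) = 1 + 1 / A := by
    rw [hbdef, hadef]; field_simp; ring
  have hcoef : -a + (A - 3) * b + 1 / A = 0 := by
    rw [hbdef, ← mul_div_assoc]; exact heq
  have hone : a + (A - 1) * b = 1 := by
    rw [hbdef]; field_simp; ring
  clear_value b a
  have hL1 : ∀ c : Fin n → ℝ, ‖(WithLp.equiv 1 (Fin n → ℝ)).symm c‖ = ∑ i, |c i| := by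
    intro c
    rw [PiLp.norm_eq_sum (by norm_num)]
    simp [Real.rpow_one]
  have hLinf : ∀ c : Fin n → ℝ, ‖(WithLp.equiv ⊤ (Fin n → ℝ)).symm c‖ = ⨆ i, |c i| := by
    intro c
    rw [PiLp.norm_eq_ciSup]
    simp
  refine ⟨a, hapos, halt1, heq,
    fun j => (WithLp.equiv 1 (Fin n → ℝ)).symm (fun i => if i = j then a else -b),
    (WithLp.equiv 1 (Fin n → ℝ)).symm (fun _ => 1 / A),
    fun j => (WithLp.equiv ⊤ (Fin n → ℝ)).symm (fun i => if i = j then 1 else -1),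
    (WithLp.equiv ⊤ (Fin n → ℝ)).symm (fun _ => 1),
    fun j i => by simp [hbdef], fun i => by simp, fun j i => by simp, fun i => by simp,
    ?_, ?_, ?_, ?_, ?_, ?_, ?_⟩
  · -- ‖x j‖ = 1
    intro j
    rw [hL1]
    have h1 : ∀ i : Fin n, |if i = j then a else -b|
        = (if i = j then a - b else 0) + b := by
      intro i
      split
      · rw [abs_of_pos hapos]; ring
      · rw [abs_neg, abs_of_nonneg hbnn]; ring
    rw [Finset.sum_congr rfl fun i _ => h1 i, Finset.sum_add_distrib,
      Finset.sum_ite_eq' _ j, Finset.sum_const, Finset.card_univ, Fintype.card_fin]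
    simp only [Finset.mem_univ, if_true, nsmul_eq_mul, ← hAdef]
    linarith [hone]
  · -- ‖xl‖ = 1
    rw [hL1]
    rw [Finset.sum_const, Finset.card_univ, Fintype.card_fin]
    rw [abs_of_pos (by positivity : (0:ℝ) < 1 / A)]
    simp only [nsmul_eq_mul, ← hAdef]
    field_simp
  · -- ‖g j‖ = 1
    intro j
    rw [hLinf]
    have : ∀ i : Fin n, |if i = j then (1:ℝ) else -1| = 1 := by
      intro i; split <;> norm_num
    simp only [this, ciSup_const]
  · -- ‖gl‖ = 1
    rw [hLinf]
    simp [ciSup_const]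
  · -- pairn (g j) (x j) = 1
    intro j
    simp only [pairn, Equiv.apply_symm_apply]
    have h1 : ∀ i : Fin n, (if i = j then (1:ℝ) else -1) * (if i = j then a else -b)
        = (if i = j then a - b else 0) + b := by
      intro i; split <;> ring
    rw [Finset.sum_congr rfl fun i _ => h1 i, Finset.sum_add_distrib,
      Finset.sum_ite_eq' _ j, Finset.sum_const, Finset.card_univ, Fintype.card_fin]
    simp only [Finset.mem_univ, if_true, nsmul_eq_mul, ← hAdef]
    linarith [hone]
  · -- pairn gl xl = 1
    simp only [pairn, Equiv.apply_symm_apply, one_mul]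
    rw [Finset.sum_const, Finset.card_univ, Fintype.card_fin]
    simp only [nsmul_eq_mul, ← hAdef]
    field_simp
  · -- frame identity
    intro v
    refine PiLp.ext fun k => ?_
    have hvk : ∀ (w : PiLp 1 (fun _ : Fin n => ℝ)) (i : Fin n),
        (WithLp.equiv 1 (Fin n → ℝ)) w i = w i := fun _ _ => rfl
    set s : ℝ := ∑ i, (WithLp.equiv 1 (Fin n → ℝ)) v i with hs
    have key1 : ∀ j : Fin n, pairn n
        ((WithLp.equiv ⊤ (Fin n → ℝ)).symm (fun i => if i = j then 1 else -1)) v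
        = 2 * (WithLp.equiv 1 (Fin n → ℝ)) v j - s := by
      intro j
      simp only [pairn, Equiv.apply_symm_apply]
      have h1 : ∀ i : Fin n, (if i = j then (1:ℝ) else -1) * (WithLp.equiv 1 (Fin n → ℝ)) v i
          = 2 * (if i = j then (WithLp.equiv 1 (Fin n → ℝ)) v i else 0)
            - (WithLp.equiv 1 (Fin n → ℝ)) v i := by
        intro i; split <;> ring
      rw [Finset.sum_congr rfl fun i _ => h1 i, Finset.sum_sub_distrib, ← Finset.mul_sum,
        Finset.sum_ite_eq' _ j]
      simp [hs]
    have key2 : pairn n ((WithLp.equiv ⊤ (Fin n → ℝ)).symm (fun _ => 1)) v = s := by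
      simp only [pairn, Equiv.apply_symm_apply, one_mul, hs]
    have hLHS : ((∑ j, pairn n
        ((WithLp.equiv ⊤ (Fin n → ℝ)).symm (fun i => if i = j then 1 else -1)) v •
          (WithLp.equiv 1 (Fin n → ℝ)).symm (fun i => if i = j then a else -b))
        + pairn n ((WithLp.equiv ⊤ (Fin n → ℝ)).symm (fun _ => 1)) v •
          (WithLp.equiv 1 (Fin n → ℝ)).symm (fun _ => 1 / A)) k
        = ∑ j, (2 * (WithLp.equiv 1 (Fin n → ℝ)) v j - s) * (if k = j then a else -b)
          + s * (1 / A) := by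
      have hsa : ∀ (F : Fin n → PiLp 1 (fun _ : Fin n => ℝ)), (∑ j, F j) k = ∑ j, F j k :=
        fun F => by rw [WithLp.ofLp_sum, Finset.sum_apply]
      rw [PiLp.add_apply, hsa]
      congr 1
      · refine Finset.sum_congr rfl fun j _ => ?_
        rw [PiLp.smul_apply, key1]
        rfl
      · rw [PiLp.smul_apply, key2]
        rfl
    rw [hLHS]
    have h2 : ∀ j : Fin n,
        (2 * (WithLp.equiv 1 (Fin n → ℝ)) v j - s) * (if k = j then a else -b)
        = (a + b) * (if j = k then 2 * (WithLp.equiv 1 (Fin n → ℝ)) v j - s else 0)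
          - b * (2 * (WithLp.equiv 1 (Fin n → ℝ)) v j - s) := by
      intro j
      rcases eq_or_ne j k with h | h
      · subst h; rw [if_pos rfl, if_pos rfl]; ring
      · rw [if_neg (fun e => h e.symm), if_neg h]; ring
    rw [Finset.sum_congr rfl fun j _ => h2 j, Finset.sum_sub_distrib, ← Finset.mul_sum,
      ← Finset.mul_sum, Finset.sum_ite_eq' _ k, Finset.sum_sub_distrib, ← Finset.mul_sum,
      Finset.sum_const, Finset.card_univ, Fintype.card_fin]
    simp only [Finset.mem_univ, if_true, nsmul_eq_mul, ← hAdef, ← hs]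
    have hsmul : ((1 + 1 / A) • v) k = (1 + 1 / A) * (WithLp.equiv 1 (Fin n → ℝ)) v k := rfl
    rw [hsmul]
    linear_combination (WithLp.equiv 1 (Fin n → ℝ)) v k * hsum2 + s * hcoef
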